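/- Let L be a finite-dimensional solvable Lie algebra with nilpotent length n(L), and let A be an ideal of L with N_{r-1}(L) ⊆ A ⊆ N_r(L). Then n(L/A) equals n(L) − r or n(L) − r + 1. -/

import Mathlib

/-- The canonical quotient map `L → L ⧸ I` as a morphism of Lie algebras. -/
def lieQuotMk {F L : Type*} [Field F] [LieRing L] [LieAlgebra F L] (I : LieIdeal F L) :
    L →ₗ⁅F⁆ L ⧸ I where
  toLinearMap := (LieSubmodule.Quotient.mk' I).toLinearMap
  map_lie' := rfl

variable (F : Type*) [Field F]

/-- The nilradical: the largest nilpotent ideal of a (finite-dimensional) Lie algebra. -/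
noncomputable def nilrad (L : Type*) [LieRing L] [LieAlgebra F L] : LieIdeal F L :=
  sSup {I : LieIdeal F L | LieModule.IsNilpotent I I}

/-- The upper nilpotent series: `N 0 = 0`, `N (i+1) / N i = nilradical of L ⧸ N i`. -/
noncomputable def upperNil (L : Type*) [LieRing L] [LieAlgebra F L] : ℕ → LieIdeal F L
  | 0 => ⊥
  | n + 1 => LieIdeal.comap (lieQuotMk (upperNil L n)) (nilrad F (L ⧸ upperNil L n))

/-- The nilpotent length: the least `n` with `N n = L`. -/
noncomputable def nilLen (L : Type*) [LieRing L] [LieAlgebra F L] : ℕ :=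
  sInf {n : ℕ | upperNil F L n = ⊤}

/-- The nilpotent residual `γ∞(L)`: the smallest ideal with nilpotent quotient. -/
noncomputable def nilResidual (L : Type*) [LieRing L] [LieAlgebra F L] : LieIdeal F L :=
  sInf {I : LieIdeal F L | LieModule.IsNilpotent (L ⧸ I) (L ⧸ I)}

/-- The lower nilpotent series: `Γ 0 = L`, `Γ (i+1) = γ∞(Γ i)`, viewed as subalgebras of `L`. -/
noncomputable def lowerNil (L : Type*) [LieRing L] [LieAlgebra F L] : ℕ → LieSubalgebra F L
  | 0 => ⊤
  | n + 1 =>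
      LieSubalgebra.map (lowerNil L n).incl
        (LieIdeal.toLieSubalgebra F (lowerNil L n) (nilResidual F (lowerNil L n)))

/-- `M` is a maximal (proper) subalgebra of `L`. -/
def IsMaxSub {L : Type*} [LieRing L] [LieAlgebra F L] (M : LieSubalgebra F L) : Prop :=
  M ≠ ⊤ ∧ ∀ K : LieSubalgebra F L, M < K → K = ⊤

/-- The Frattini subalgebra: the intersection of all maximal subalgebras. -/
noncomputable def lieFrattini (L : Type*) [LieRing L] [LieAlgebra F L] : LieSubalgebra F L :=
  sInf {M : LieSubalgebra F L | IsMaxSub F M}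

/-- The core of a subalgebra `U`: the largest ideal of `L` contained in `U`. -/
noncomputable def lieCore {L : Type*} [LieRing L] [LieAlgebra F L] (U : LieSubalgebra F L) :
    LieIdeal F L :=
  sSup {I : LieIdeal F L | (I : Set L) ⊆ (U : Set L)}

/-- `A` is a minimal ideal of `L`. -/
def IsMinIdeal {L : Type*} [LieRing L] [LieAlgebra F L] (A : LieIdeal F L) : Prop :=
  A ≠ ⊥ ∧ ∀ B : LieIdeal F L, B < A → B = ⊥

/-- The Frattini series: `φ i (L) / N (i-1) (L) = φ(L ⧸ N (i-1) (L))` for `i ≥ 1`. -/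
noncomputable def fratSeries (L : Type*) [LieRing L] [LieAlgebra F L] (i : ℕ) :
    LieSubalgebra F L :=
  LieSubalgebra.comap (lieQuotMk (upperNil F L (i - 1)))
    (lieFrattini F (L ⧸ upperNil F L (i - 1)))

/-- `L` is extreme: `N i (L) / φ i (L)` is a chief factor of `L` for each `1 ≤ i ≤ n(L)`. -/
def IsExtremeLie (L : Type*) [LieRing L] [LieAlgebra F L] : Prop :=
  ∀ i, 1 ≤ i → i ≤ nilLen F L →
    (fratSeries F L i : Set L) ⊆ (upperNil F L i : Set L) ∧
    (fratSeries F L i : Set L) ≠ (upperNil F L i : Set L) ∧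
    ∀ C : LieIdeal F L, (fratSeries F L i : Set L) ⊆ (C : Set L) → C ≤ upperNil F L i →
      (C : Set L) = (fratSeries F L i : Set L) ∨ C = upperNil F L i

/-- `L` is supersolvable: it has a chain of ideals with one-dimensional quotients. -/
def IsSupersolvable (L : Type*) [LieRing L] [LieAlgebra F L] : Prop :=
  ∃ (n : ℕ) (C : ℕ → LieIdeal F L), C 0 = ⊥ ∧ C n = ⊤ ∧
    ∀ i < n, C i ≤ C (i + 1) ∧
      Module.finrank F (C (i + 1)) = Module.finrank F (C i) + 1

/-- A minimal ideal `A` is complemented if some maximal subalgebra `M` satisfies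
`L = A + M` and `A ∩ M = 0`. -/
def IsComplementedIdeal {L : Type*} [LieRing L] [LieAlgebra F L] (A : LieIdeal F L) : Prop :=
  ∃ M : LieSubalgebra F L, IsMaxSub F M ∧
    A.toSubmodule ⊔ M.toSubmodule = ⊤ ∧ A.toSubmodule ⊓ M.toSubmodule = ⊥
/-!
A surjection `M₁ → M₂` carries a nilpotent ideal onto a nilpotent ideal, hence maps the nilradical
into the nilradical, and by induction `N_j(M₁)` into `N_j(M₂)`. Applied to two quotient maps of `M`
with the same kernel this shows that the upper nilpotent series of `M ⧸ N_k(M)` is the series of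
`M` shifted by `k`. For `N_{r-1}(L) ≤ A ≤ N_r(L)` the surjections
`L ⧸ N_{r-1}(L) → L ⧸ A → L ⧸ N_r(L)` then squeeze `n(L ⧸ A)` between `n(L) - r` and
`n(L) - r + 1`.
-/

open Function

namespace LieHom

variable {R L M₁ M₂ : Type*} [CommRing R] [LieRing L] [LieAlgebra R L]
  [LieRing M₁] [LieAlgebra R M₁] [LieRing M₂] [LieAlgebra R M₂]

theorem apply_eq_of_ker_le {g : L →ₗ⁅R⁆ M₁} {h : L →ₗ⁅R⁆ M₂} (hker : g.ker ≤ h.ker)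
    {a b : L} (hab : g a = g b) : h a = h b := by
  have hmem : a - b ∈ h.ker := hker <| mem_ker.2 (by rw [map_sub, hab, sub_self])
  rwa [mem_ker, map_sub, sub_eq_zero] at hmem

noncomputable def liftOfSurjective (g : L →ₗ⁅R⁆ M₁) (h : L →ₗ⁅R⁆ M₂) (hg : Surjective g)
    (hker : g.ker ≤ h.ker) : M₁ →ₗ⁅R⁆ M₂ where
  toFun y := h (surjInv hg y)
  map_add' y z := by
    rw [← map_add]
    exact apply_eq_of_ker_le hker (by simp [surjInv_eq hg])
  map_smul' t y := by
    rw [RingHom.id_apply, ← map_smul]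
    exact apply_eq_of_ker_le hker (by simp [surjInv_eq hg])
  map_lie' {y z} := by
    rw [← map_lie]
    exact apply_eq_of_ker_le hker (by simp [surjInv_eq hg])

variable {g : L →ₗ⁅R⁆ M₁} {h : L →ₗ⁅R⁆ M₂} (hg : Surjective g) (hker : g.ker ≤ h.ker)

@[simp]
theorem liftOfSurjective_apply (x : L) : liftOfSurjective g h hg hker (g x) = h x :=
  apply_eq_of_ker_le hker (surjInv_eq hg (g x))

theorem surjective_liftOfSurjective (hh : Surjective h) :
    Surjective (liftOfSurjective g h hg hker) := by
  intro z
  obtain ⟨x, rfl⟩ := hh z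
  exact ⟨g x, liftOfSurjective_apply hg hker x⟩

end LieHom

theorem LieIdeal.isNilpotent_map {R L L' : Type*} [CommRing R] [LieRing L] [LieAlgebra R L]
    [LieRing L'] [LieAlgebra R L'] {f : L →ₗ⁅R⁆ L'} (hf : Surjective f) (I : LieIdeal R L)
    [LieRing.IsNilpotent I] : LieRing.IsNilpotent (I.map f) := by
  let e : I →ₗ⁅R⁆ I.map f :=
    { toFun x := ⟨f x, mem_map x.2⟩
      map_add' x y := by ext; simp
      map_smul' t x := by ext; simp
      map_lie' {x y} := by ext; simp [coe_bracket_of_module] }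
  have he : Surjective e := by
    rintro ⟨y, hy⟩
    obtain ⟨x, hx⟩ := mem_map_of_surjective hf hy
    exact ⟨x, Subtype.ext hx⟩
  exact he.lieAlgebra_isNilpotent

section UpperNilpotentSeries

variable {F} {L M M₁ M₂ : Type*} [LieRing L] [LieAlgebra F L]
  [LieRing M] [LieAlgebra F M] [LieRing M₁] [LieAlgebra F M₁] [LieRing M₂] [LieAlgebra F M₂]

theorem lieQuotMk_surjective (I : LieIdeal F M) : Surjective (lieQuotMk I) :=
  LieSubmodule.Quotient.surjective_mk' I

@[simp]
theorem lieQuotMk_eq_zero_iff {I : LieIdeal F M} {x : M} : lieQuotMk I x = 0 ↔ x ∈ I :=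
  LieSubmodule.Quotient.mk_eq_zero I

@[simp]
theorem ker_lieQuotMk (I : LieIdeal F M) : (lieQuotMk I).ker = I := by
  ext x
  exact LieHom.mem_ker.trans lieQuotMk_eq_zero_iff

theorem map_nilrad_le {f : M₁ →ₗ⁅F⁆ M₂} (hf : Surjective f) :
    (nilrad F M₁).map f ≤ nilrad F M₂ := by
  rw [nilrad, LieIdeal.map_le_iff_le_comap]
  refine sSup_le fun I (hI : LieRing.IsNilpotent I) => ?_
  rw [← LieIdeal.map_le_iff_le_comap]
  exact le_sSup (LieIdeal.isNilpotent_map hf I)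

theorem apply_mem_nilrad_of_ker_le {g : L →ₗ⁅F⁆ M₁} {h : L →ₗ⁅F⁆ M₂} (hg : Surjective g)
    (hh : Surjective h) (hker : g.ker ≤ h.ker) {x : L} (hx : g x ∈ nilrad F M₁) :
    h x ∈ nilrad F M₂ := by
  rw [← LieHom.liftOfSurjective_apply hg hker]
  exact map_nilrad_le (LieHom.surjective_liftOfSurjective hg hker hh) (LieIdeal.mem_map hx)

theorem mem_upperNil_succ_iff (j : ℕ) (x : M) :
    x ∈ upperNil F M (j + 1) ↔ lieQuotMk (upperNil F M j) x ∈ nilrad F (M ⧸ upperNil F M j) :=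
  LieIdeal.mem_comap

theorem upperNil_mono : Monotone (upperNil F M) := by
  refine monotone_nat_of_le_succ fun j x hx => ?_
  rw [mem_upperNil_succ_iff, lieQuotMk_eq_zero_iff.2 hx]
  exact zero_mem _

theorem apply_mem_upperNil {f : M₁ →ₗ⁅F⁆ M₂} (hf : Surjective f) {j : ℕ} {x : M₁}
    (hx : x ∈ upperNil F M₁ j) : f x ∈ upperNil F M₂ j := by
  induction j generalizing x with
  | zero =>
    rw [upperNil, LieSubmodule.mem_bot] at hx ⊢
    rw [hx, map_zero]
  | succ j ih =>
    rw [mem_upperNil_succ_iff] at hx ⊢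
    refine apply_mem_nilrad_of_ker_le (h := (lieQuotMk _).comp f) (lieQuotMk_surjective _)
      ((lieQuotMk_surjective _).comp hf) (fun y hy => ?_) hx
    rw [ker_lieQuotMk] at hy
    exact LieHom.mem_ker.2 (lieQuotMk_eq_zero_iff.2 (ih hy))

theorem upperNil_eq_top_of_surjective {f : M₁ →ₗ⁅F⁆ M₂} (hf : Surjective f) {j : ℕ}
    (h : upperNil F M₁ j = ⊤) : upperNil F M₂ j = ⊤ := by
  refine eq_top_iff.2 fun y _ => ?_
  obtain ⟨x, rfl⟩ := hf y
  exact apply_mem_upperNil hf (h ▸ LieSubmodule.mem_top x)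

theorem comap_upperNil_quotient (k j : ℕ) :
    (upperNil F (M ⧸ upperNil F M k) j).comap (lieQuotMk (upperNil F M k)) =
      upperNil F M (k + j) := by
  induction j with
  | zero => exact ker_lieQuotMk (upperNil F M k)
  | succ j ih =>
    set q := (lieQuotMk (upperNil F (M ⧸ upperNil F M k) j)).comp (lieQuotMk (upperNil F M k))
    -- both sides are preimages of a nilradical along surjections with kernel `N_{k+j}(M)`
    have hker : q.ker = (lieQuotMk (upperNil F M (k + j))).ker := by
      ext x
      rw [ker_lieQuotMk, ← ih, LieIdeal.mem_comap, LieHom.mem_ker, LieHom.comp_apply,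
        ← LieHom.mem_ker, ker_lieQuotMk]
    have hq : Surjective q := (lieQuotMk_surjective _).comp (lieQuotMk_surjective _)
    ext x
    rw [LieIdeal.mem_comap, mem_upperNil_succ_iff, ← add_assoc, mem_upperNil_succ_iff]
    exact ⟨apply_mem_nilrad_of_ker_le (g := q) hq (lieQuotMk_surjective _) hker.le,
      apply_mem_nilrad_of_ker_le (h := q) (lieQuotMk_surjective _) hq hker.ge⟩

theorem upperNil_quotient_eq_top_iff (k j : ℕ) :
    upperNil F (M ⧸ upperNil F M k) j = ⊤ ↔ upperNil F M (k + j) = ⊤ := by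
  simp only [← comap_upperNil_quotient k j, eq_top_iff, SetLike.le_def, LieSubmodule.mem_top,
    LieIdeal.mem_comap, forall_const]
  exact (lieQuotMk_surjective _).forall

theorem upperNil_quotient_eq_top_of_le {I J : LieIdeal F M} (hIJ : I ≤ J) {j : ℕ}
    (h : upperNil F (M ⧸ I) j = ⊤) : upperNil F (M ⧸ J) j = ⊤ :=
  upperNil_eq_top_of_surjective (LieHom.surjective_liftOfSurjective (lieQuotMk_surjective I)
    (by simpa using hIJ) (lieQuotMk_surjective J)) h

theorem upperNil_nilLen_eq_top (h : ∃ m, upperNil F M m = ⊤) :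
    upperNil F M (nilLen F M) = ⊤ :=
  Nat.sInf_mem h

theorem nilLen_bounds_of_shift {r s : ℕ}
    (hup : ∀ j, upperNil F M₂ j = ⊤ → upperNil F M₁ (r + j) = ⊤)
    (hdown : ∀ j, upperNil F M₁ (s + j) = ⊤ → upperNil F M₂ j = ⊤) :
    nilLen F M₂ ≤ nilLen F M₁ - s ∧ nilLen F M₁ ≤ r + nilLen F M₂ := by
  by_cases h₁ : ∃ m, upperNil F M₁ m = ⊤
  · have htop₁ := upperNil_nilLen_eq_top h₁
    have htop₂ : upperNil F M₂ (nilLen F M₁ - s) = ⊤ :=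
      hdown _ (top_le_iff.1 (htop₁ ▸ upperNil_mono (by omega)))
    exact ⟨Nat.sInf_le htop₂, Nat.sInf_le (hup _ (upperNil_nilLen_eq_top ⟨_, htop₂⟩))⟩
  · -- neither series reaches `⊤`, so both lengths are the junk value `sInf ∅ = 0`
    simp only [not_exists] at h₁
    have h₂ : ∀ j, upperNil F M₂ j ≠ ⊤ := fun j hj => h₁ _ (hup j hj)
    simp [nilLen, h₁, h₂]

end UpperNilpotentSeries

theorem stmt3_general {F L : Type*} [Field F] [LieRing L] [LieAlgebra F L]
    (r : ℕ) (A : LieIdeal F L)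
    (h1 : upperNil F L (r - 1) ≤ A) (h2 : A ≤ upperNil F L r) :
    nilLen F (L ⧸ A) = nilLen F L - r ∨ nilLen F (L ⧸ A) = nilLen F L - r + 1 := by
  have hup : ∀ j, upperNil F (L ⧸ A) j = ⊤ → upperNil F L (r + j) = ⊤ := fun j h =>
    (upperNil_quotient_eq_top_iff r j).1 (upperNil_quotient_eq_top_of_le h2 h)
  have hdown : ∀ j, upperNil F L (r - 1 + j) = ⊤ → upperNil F (L ⧸ A) j = ⊤ := fun j h =>
    upperNil_quotient_eq_top_of_le h1 ((upperNil_quotient_eq_top_iff (r - 1) j).2 h)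
  obtain ⟨hle, hge⟩ := nilLen_bounds_of_shift hup hdown
  omega

/-- If `A` is an ideal with `N (r-1) (L) ⊆ A ⊆ N r (L)`, then `n(L ⧸ A)` equals
`n(L) - r` or `n(L) - r + 1`. -/
theorem stmt3 {F L : Type*} [Field F] [LieRing L] [LieAlgebra F L]
    [FiniteDimensional F L] [LieAlgebra.IsSolvable L]
    (r : ℕ) (hr : 1 ≤ r) (A : LieIdeal F L)
    (h1 : upperNil F L (r - 1) ≤ A) (h2 : A ≤ upperNil F L r) :
    nilLen F (L ⧸ A) = nilLen F L - r ∨ nilLen F (L ⧸ A) = nilLen F L - r + 1 :=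
  stmt3_general r A h1 h2
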